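/- Let (g, [·,·]_g) and (h, [·,·]_h) be Lie algebras over a field K, ρ : g → Der(h) a Lie algebra homomorphism into the derivations of h, λ ∈ K, and let B : h → g be a relative Rota-Baxter operator of weight λ, i.e., [B(u), B(v)]_g = B(ρ(B(u))v − ρ(B(v))u + λ[u,v]_h) for all u, v ∈ h. Then the bracket [u, v]_B := λ[u,v]_h + ρ(B(u))v − ρ(B(v))u is a Lie algebra structure on h, and the map σ : h → End(g) defined by σ(v)(x) = [B(v), x]_g + B(ρ(x)v) is a representation of the Lie algebra (h, [·,·]_B) on the vector space g, i.e., σ([u,v]_B) = σ(u) ∘ σ(v) − σ(v) ∘ σ(u) for all u, v ∈ h. -/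

import Mathlib

/-!
The bracket `[u, v]_B` is bilinear and alternating by construction; the Rota-Baxter identity says
exactly that `B` carries it to the bracket of `L`. Expanding a double bracket `[a, [b, c]_B]_B`
with this and with the derivation rule for `ρ`, the cyclic sum of the expansions collapses to
`lam²` times the Jacobi sum of `H`. For the representation, `σ(v) = ad(Bv) + B ∘ ρ(·) v`, and the
commutator `[σ(u), σ(v)]` is computed the same way, using the Jacobi identity of `L`, that `ρ` is
a Lie homomorphism into derivations, and once more the Rota-Baxter identity.
-/

def IsLieBracketOn (K V : Type*) [Field K] [AddCommGroup V] [Module K V]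
    (b : V → V → V) : Prop :=
  (∀ x y z : V, b (x + y) z = b x z + b y z) ∧
  (∀ (c : K) (x y : V), b (c • x) y = c • b x y) ∧
  (∀ x y z : V, b x (y + z) = b x y + b x z) ∧
  (∀ (c : K) (x y : V), b x (c • y) = c • b x y) ∧
  (∀ x : V, b x x = 0) ∧
  (∀ x y z : V, b x (b y z) + b y (b z x) + b z (b x y) = 0)

variable {K L H : Type*} [Field K] [LieRing L] [LieAlgebra K L]
  [LieRing H] [LieAlgebra K H]

def brRB (ρ : L →ₗ⁅K⁆ LieDerivation K H H) (lam : K) (B : H →ₗ[K] L)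
    (u v : H) : H :=
  lam • ⁅u, v⁆ + ρ (B u) v - ρ (B v) u

def sigmaRB (ρ : L →ₗ⁅K⁆ LieDerivation K H H) (B : H →ₗ[K] L)
    (v : H) (x : L) : L :=
  ⁅B v, x⁆ + B (ρ x v)

section RelativeRotaBaxter

variable (ρ : L →ₗ⁅K⁆ LieDerivation K H H) (lam : K) (B : H →ₗ[K] L)

def IsRelativeRotaBaxter : Prop :=
  ∀ u v : H, ⁅B u, B v⁆ = B (ρ (B u) v - ρ (B v) u + lam • ⁅u, v⁆)

theorem brRB_add_left (u v w : H) :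
    brRB ρ lam B (u + v) w = brRB ρ lam B u w + brRB ρ lam B v w := by
  simp only [brRB, map_add, add_lie, LieDerivation.add_apply, smul_add]
  abel

theorem brRB_add_right (u v w : H) :
    brRB ρ lam B u (v + w) = brRB ρ lam B u v + brRB ρ lam B u w := by
  simp only [brRB, map_add, lie_add, LieDerivation.add_apply, smul_add]
  abel

theorem brRB_smul_left (c : K) (u v : H) :
    brRB ρ lam B (c • u) v = c • brRB ρ lam B u v := by
  simp only [brRB, map_smul, smul_lie, LieDerivation.smul_apply, smul_add, smul_sub,
    smul_comm c lam]

theorem brRB_smul_right (c : K) (u v : H) :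
    brRB ρ lam B u (c • v) = c • brRB ρ lam B u v := by
  simp only [brRB, map_smul, lie_smul, LieDerivation.smul_apply, smul_add, smul_sub,
    smul_comm c lam]

theorem brRB_self (u : H) : brRB ρ lam B u u = 0 := by
  simp [brRB]

variable {ρ lam B}

theorem map_brRB (hB : IsRelativeRotaBaxter ρ lam B) (u v : H) : B (brRB ρ lam B u v) = ⁅B u, B v⁆ := by
  rw [hB u v, brRB]
  congr 1
  abel

theorem brRB_brRB (hB : IsRelativeRotaBaxter ρ lam B) (a b c : H) :
    brRB ρ lam B a (brRB ρ lam B b c) =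
      lam • lam • ⁅a, ⁅b, c⁆⁆
        - lam • ⁅ρ (B b) c, a⁆ + lam • ⁅ρ (B c) b, a⁆
        + lam • ⁅ρ (B a) b, c⁆ - lam • ⁅ρ (B a) c, b⁆
        + ρ (B a) (ρ (B b) c) - ρ (B a) (ρ (B c) b)
        - ρ (B b) (ρ (B c) a) + ρ (B c) (ρ (B b) a) := by
  conv_lhs => rw [brRB, map_brRB hB, LieHom.map_lie, brRB]
  simp only [lie_add, lie_sub, lie_smul, smul_add, smul_sub, map_add, map_sub, map_smul,
    LieDerivation.apply_lie_eq_add, LieDerivation.lie_apply]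
  rw [← lie_skew a (ρ (B b) c), ← lie_skew a (ρ (B c) b), ← lie_skew b (ρ (B a) c)]
  module

theorem brRB_jacobi (hB : IsRelativeRotaBaxter ρ lam B) (a b c : H) :
    brRB ρ lam B a (brRB ρ lam B b c) + brRB ρ lam B b (brRB ρ lam B c a)
      + brRB ρ lam B c (brRB ρ lam B a b) = 0 := by
  rw [brRB_brRB hB a b c, brRB_brRB hB b c a, brRB_brRB hB c a b,
    eq_neg_of_add_eq_zero_right (lie_jacobi a b c)]
  module

theorem isLieBracketOn_brRB (hB : IsRelativeRotaBaxter ρ lam B) :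
    IsLieBracketOn K H (brRB ρ lam B) :=
  ⟨brRB_add_left ρ lam B, brRB_smul_left ρ lam B, brRB_add_right ρ lam B,
    brRB_smul_right ρ lam B, brRB_self ρ lam B, brRB_jacobi hB⟩

theorem sigmaRB_brRB (hB : IsRelativeRotaBaxter ρ lam B) (u v : H) (x : L) :
    sigmaRB ρ B (brRB ρ lam B u v) x =
      sigmaRB ρ B u (sigmaRB ρ B v x) - sigmaRB ρ B v (sigmaRB ρ B u x) := by
  simp only [sigmaRB]
  rw [map_brRB hB, lie_lie, brRB, lie_add, lie_add, hB u (ρ x v), hB v (ρ x u)]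
  simp only [map_add, map_sub, map_smul, LieHom.map_lie, LieDerivation.add_apply,
    LieDerivation.lie_apply, LieDerivation.apply_lie_eq_add]
  rw [← lie_skew u (ρ x v), ← lie_skew v (ρ x u)]
  simp only [map_neg]
  module

end RelativeRotaBaxter

/-- Let `ρ : L → Der(H)` be an action of the Lie algebra `L` on the
Lie algebra `H`, `lam ∈ K`, and `B : H → L` a relative Rota-Baxter operator of
weight `lam`, i.e. `[Bu, Bv] = B(ρ(Bu)v − ρ(Bv)u + lam•[u,v])`. Then
`[u, v]_B = lam•[u,v] + ρ(Bu)v − ρ(Bv)u` is a Lie algebra structure on `H`, and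
`σ(v)(x) = [Bv, x] + B(ρ(x)v)` is a representation of `(H, [·,·]_B)` on the
vector space `L`. -/
theorem stmt16 (K L H : Type*) [Field K] [LieRing L] [LieAlgebra K L]
    [LieRing H] [LieAlgebra K H]
    (ρ : L →ₗ⁅K⁆ LieDerivation K H H) (lam : K) (B : H →ₗ[K] L)
    (hB : ∀ u v : H, ⁅B u, B v⁆ = B (ρ (B u) v - ρ (B v) u + lam • ⁅u, v⁆)) :
    IsLieBracketOn K H (brRB ρ lam B) ∧
    (∀ (u v : H) (x : L),
      sigmaRB ρ B (brRB ρ lam B u v) x =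
        sigmaRB ρ B u (sigmaRB ρ B v x) - sigmaRB ρ B v (sigmaRB ρ B u x)) :=
  ⟨isLieBracketOn_brRB hB, sigmaRB_brRB hB⟩
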